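/- arXiv:2509.19418 — 4 statements merged into one kernel-verified Lean document; each statement's English description precedes it below -/
import Mathlib

section
/- In the setting below, let β⁰ ∈ ℝ^p be a point that is NOT a critical point. Then there exists η₀ > 0 such that for every η with 0 < η ≤ η₀ one has R(S_{ηλ}(β⁰ − η g(β⁰))) < R(β⁰), where S_{ηλ} is applied componentwise. -/
open Filter

/-- Soft-thresholding function: `S_γ(v) = v - γ` if `v > γ`, `0` if `|v| ≤ γ`,
`v + γ` if `v < -γ`. -/
noncomputable def soft (γ v : ℝ) : ℝ :=
  if γ < v then v - γ else if v < -γ then v + γ else 0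

/-- `β` is a critical point: for each coordinate `i`, either `β i = 0` and `|g_i(β)| ≤ λ`,
or `β i ≠ 0` and `g_i(β) + λ · sgn(β i) = 0`. -/
def IsCriticalPoint {p : ℕ} (lam : ℝ) (g : (Fin p → ℝ) → (Fin p → ℝ))
    (β : Fin p → ℝ) : Prop :=
  ∀ i, (β i = 0 ∧ |g β i| ≤ lam) ∨ (β i ≠ 0 ∧ g β i + lam * Real.sign (β i) = 0)

/-!
Let `m = gradientMapping lam g β0`, coordinatewise the element of least absolute value of
`g β0 + λ ∂‖·‖₁(β0)`; it vanishes exactly at critical points. For small `η` the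
soft-thresholding step is the straight move `β0 - η • m`, and along this line the partials
`g + λ sgn` of `R` pair with `-m` to give about `-‖m‖² < 0`. Since `R` is only known to be
differentiable off the coordinate hyperplanes, the mean value theorem is applied on copies of
the line shifted by `ε` off those hyperplanes, and `ε → 0` by continuity of `R`.
-/

open Set Topology Real

theorem soft_add_mul_sign {γ : ℝ} (hγ : 0 ≤ γ) (u : ℝ) : soft γ (u + γ * sign u) = u := by
  unfold soft
  rcases lt_trichotomy u 0 with h | rfl | h
  · rw [sign_of_neg h]; split_ifs <;> linarith
  · rw [sign_zero]; split_ifs <;> linarith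
  · rw [sign_of_pos h]; split_ifs <;> linarith

theorem soft_add_mul_sign_soft {γ v : ℝ} (h : soft γ v ≠ 0) :
    soft γ v + γ * sign (soft γ v) = v := by
  unfold soft at *
  split_ifs at * with h₁ h₂
  · rw [sign_of_pos (by linarith)]; ring
  · rw [sign_of_neg (by linarith)]; ring
  · exact absurd rfl h

theorem soft_mul_mul {c : ℝ} (hc : 0 < c) (γ v : ℝ) : soft (c * γ) (c * v) = c * soft γ v := by
  unfold soft
  simp only [mul_lt_mul_iff_right₀ hc, ← mul_neg]
  split_ifs <;> ring

theorem soft_neg {γ : ℝ} (hγ : 0 ≤ γ) (v : ℝ) : soft γ (-v) = -soft γ v := by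
  unfold soft
  split_ifs <;> first | (exfalso; linarith) | ring

theorem soft_eq_zero_iff {γ v : ℝ} : soft γ v = 0 ↔ |v| ≤ γ := by
  unfold soft
  rw [abs_le]
  split_ifs <;> constructor <;> intros <;> first | constructor <;> linarith | linarith

theorem sign_mul_of_pos {t : ℝ} (ht : 0 < t) (x : ℝ) : sign (t * x) = sign x := by
  rcases lt_trichotomy x 0 with h | rfl | h
  · rw [sign_of_neg (mul_neg_of_pos_of_neg ht h), sign_of_neg h]
  · rw [mul_zero]
  · rw [sign_of_pos (mul_pos ht h), sign_of_pos h]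

theorem eventually_sign_eq {b : ℝ} (hb : b ≠ 0) : ∀ᶠ x in 𝓝 b, sign x = sign b := by
  rcases hb.lt_or_gt with h | h
  · filter_upwards [gt_mem_nhds h] with x hx
    rw [sign_of_neg hx, sign_of_neg h]
  · filter_upwards [lt_mem_nhds h] with x hx
    rw [sign_of_pos hx, sign_of_pos h]

/-- The element of least absolute value of `G + lam * ∂|·|(b)`. -/
noncomputable def minNormSubgrad (lam b G : ℝ) : ℝ :=
  if b = 0 then soft lam G else G + lam * sign b

section MinNormSubgrad

variable {lam b G : ℝ}

theorem soft_sub_mul_eq_sub_mul_minNormSubgrad (hlam : 0 ≤ lam) {η : ℝ} (hη : 0 < η)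
    (hsign : b ≠ 0 → sign (b - η * minNormSubgrad lam b G) = sign b) :
    soft (η * lam) (b - η * G) = b - η * minNormSubgrad lam b G := by
  by_cases hb : b = 0
  · simp only [hb, minNormSubgrad, if_true, zero_sub, ← mul_neg]
    rw [soft_mul_mul hη, soft_neg hlam, mul_neg]
  · have hstep : b - η * G = (b - η * minNormSubgrad lam b G)
        + η * lam * sign (b - η * minNormSubgrad lam b G) := by
      rw [hsign hb, minNormSubgrad, if_neg hb]; ring
    rw [hstep, soft_add_mul_sign (by positivity)]

theorem minNormSubgrad_mul_add_sign {t : ℝ} (ht : 0 < t)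
    (hsign : b ≠ 0 → sign (b - t * minNormSubgrad lam b G) = sign b) :
    minNormSubgrad lam b G * (G + lam * sign (b - t * minNormSubgrad lam b G))
      = minNormSubgrad lam b G ^ 2 := by
  rcases eq_or_ne b 0 with rfl | hb
  · have hsoft : minNormSubgrad lam 0 G = soft lam G := if_pos rfl
    rw [zero_sub, sign_neg, sign_mul_of_pos ht, hsoft]
    rcases eq_or_ne (soft lam G) 0 with hm | hm
    · rw [hm]; ring
    · nth_rw 2 [← soft_add_mul_sign_soft hm]
      ring
  · rw [hsign hb, minNormSubgrad, if_neg hb]; ring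

end MinNormSubgrad

theorem image_sub_le_mul_sub_of_hasDerivAt_le {f f' : ℝ → ℝ} {a b C : ℝ} (hab : a < b)
    (hf : ContinuousOn f (Icc a b)) (hf' : ∀ t ∈ Ioo a b, HasDerivAt f (f' t) t)
    (hle : ∀ t ∈ Ioo a b, f' t ≤ C) : f b - f a ≤ C * (b - a) := by
  obtain ⟨ξ, hξ, hslope⟩ := exists_hasDerivAt_eq_slope f f' hab hf hf'
  rw [eq_div_iff (sub_pos.2 hab).ne'] at hslope
  nlinarith [hle ξ hξ]

theorem exists_pos_forall_abs_lt_of_eventually {E : Type*} [NormedAddCommGroup E]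
    [NormedSpace ℝ E] {P : E → Prop} {b : E} (h : ∀ᶠ x in 𝓝 b, P x) (w m : E) :
    ∃ δ > 0, ∀ ε t : ℝ, |ε| < δ → |t| < δ → P (b + ε • w - t • m) := by
  have hcont : ContinuousAt (fun q : ℝ × ℝ => b + q.1 • w - q.2 • m) 0 := by fun_prop
  have h0 : b + (0 : ℝ × ℝ).1 • w - (0 : ℝ × ℝ).2 • m = b := by simp
  obtain ⟨δ, hδ, hball⟩ := Metric.eventually_nhds_iff.1 (hcont.eventually (h0 ▸ h))
  refine ⟨δ, hδ, fun ε t hε ht => @hball (ε, t) ?_⟩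
  simpa [Prod.dist_eq] using ⟨hε, ht⟩

section Lasso

variable {p : ℕ} {lam : ℝ} {g : (Fin p → ℝ) → Fin p → ℝ} {R : (Fin p → ℝ) → ℝ}

noncomputable def gradientMapping (lam : ℝ) (g : (Fin p → ℝ) → Fin p → ℝ) (β : Fin p → ℝ) :
    Fin p → ℝ :=
  fun j => minNormSubgrad lam (β j) (g β j)

def HasLassoPartials (lam : ℝ) (g : (Fin p → ℝ) → Fin p → ℝ) (R : (Fin p → ℝ) → ℝ) : Prop :=
  ∀ β : Fin p → ℝ, (∀ i, β i ≠ 0) →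
    DifferentiableAt ℝ R β ∧ ∀ i, fderiv ℝ R β (Pi.single i 1) = g β i + lam * sign (β i)

theorem eventually_sign_eq_sign (b : Fin p → ℝ) :
    ∀ᶠ x in 𝓝 b, ∀ j, b j ≠ 0 → sign (x j) = sign (b j) := by
  refine eventually_all.2 fun j => ?_
  by_cases hb : b j = 0
  · exact Eventually.of_forall fun _ h => absurd hb h
  · filter_upwards [(continuous_apply j).continuousAt.eventually (eventually_sign_eq hb)]
      with x hx using fun _ => hx

theorem hasDerivAt_comp_sub_smul
    (hdiff : HasLassoPartials lam g R)
    {y m : Fin p → ℝ} {t : ℝ} (hx : ∀ j, (y - t • m) j ≠ 0) :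
    HasDerivAt (fun s => R (y - s • m))
      (-∑ j, m j * (g (y - t • m) j + lam * sign ((y - t • m) j))) t := by
  set x := y - t • m
  obtain ⟨hR, hpartial⟩ := hdiff x hx
  have hline : HasDerivAt (fun s : ℝ => y - s • m) (-m) t := by
    simpa using ((hasDerivAt_id t).smul_const m).const_sub y
  have hm : fderiv ℝ R x m = ∑ j, m j * (g x j + lam * sign (x j)) := by
    conv_lhs => rw [pi_eq_sum_univ' m]
    simp [map_sum, hpartial]
  have hcomp := hR.hasFDerivAt.comp_hasDerivAt t hline
  rw [map_neg, hm] at hcomp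
  exact hcomp

theorem exists_gradientMapping_ne_zero {β : Fin p → ℝ} (h : ¬ IsCriticalPoint lam g β) :
    ∃ i, gradientMapping lam g β i ≠ 0 := by
  contrapose! h
  intro i
  by_cases hb : β i = 0
  · exact Or.inl ⟨hb,
      soft_eq_zero_iff.1 (by simpa [gradientMapping, minNormSubgrad, hb] using h i)⟩
  · exact Or.inr ⟨hb, by simpa [gradientMapping, minNormSubgrad, hb] using h i⟩

theorem soft_step_eq_sub_smul_gradientMapping (hlam : 0 ≤ lam) {β : Fin p → ℝ} {η : ℝ}
    (hη : 0 < η)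
    (hsign : ∀ j, β j ≠ 0 → sign ((β - η • gradientMapping lam g β) j) = sign (β j)) :
    (fun i => soft (η * lam) (β i - η * g β i)) = β - η • gradientMapping lam g β := by
  funext j
  exact soft_sub_mul_eq_sub_mul_minNormSubgrad hlam hη (hsign j)

/-- The line `t ↦ b - t • gradientMapping lam g b`, shifted by `ε` in the coordinates that it
leaves at `0`, so that for small `ε, t > 0` it avoids the coordinate hyperplanes. -/
noncomputable def perturbedLine (lam : ℝ) (g : (Fin p → ℝ) → Fin p → ℝ) (b : Fin p → ℝ)
    (ε t : ℝ) : Fin p → ℝ :=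
  b + ε • (fun j => if gradientMapping lam g b j = 0 then 1 else 0) - t • gradientMapping lam g b

section PerturbedLine

variable {b : Fin p → ℝ} {ε t : ℝ}

theorem perturbedLine_apply_of_gradientMapping_ne_zero {j : Fin p}
    (hm : gradientMapping lam g b j ≠ 0) :
    perturbedLine lam g b ε t j = b j - t * gradientMapping lam g b j := by
  simp [perturbedLine, hm]

theorem perturbedLine_apply_ne_zero (hε : 0 < ε) (ht : 0 < t)
    (hsign : ∀ j, b j ≠ 0 → sign (perturbedLine lam g b ε t j) = sign (b j)) (j : Fin p) :
    perturbedLine lam g b ε t j ≠ 0 := by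
  by_cases hb : b j = 0
  · by_cases hm : gradientMapping lam g b j = 0
    · simp [perturbedLine, hb, hm, hε.ne']
    · simp [perturbedLine_apply_of_gradientMapping_ne_zero hm, hb, hm, ht.ne']
  · rw [Ne, ← Real.sign_eq_zero_iff, hsign j hb, Real.sign_eq_zero_iff]
    exact hb

theorem sum_gradientMapping_mul_add_sign_perturbedLine (ht : 0 < t)
    (hsign : ∀ j, b j ≠ 0 → sign (perturbedLine lam g b ε t j) = sign (b j)) :
    ∑ j, gradientMapping lam g b j *
        (g (perturbedLine lam g b ε t) j + lam * sign (perturbedLine lam g b ε t j))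
      = ∑ j, gradientMapping lam g b j ^ 2
        + ∑ j, gradientMapping lam g b j * (g (perturbedLine lam g b ε t) j - g b j) := by
  rw [← Finset.sum_add_distrib]
  refine Finset.sum_congr rfl fun j _ => ?_
  by_cases hm : gradientMapping lam g b j = 0
  · simp [hm]
  have hx := perturbedLine_apply_of_gradientMapping_ne_zero (ε := ε) (t := t) hm
  have key := minNormSubgrad_mul_add_sign (lam := lam) (G := g b j) ht (hx ▸ hsign j)
  rw [hx]
  simp only [gradientMapping] at key ⊢
  linarith

theorem perturbedLine_descent (hdiff : HasLassoPartials lam g R) (hR : Continuous R) {c η : ℝ}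
    (hε : 0 < ε) (hη : 0 < η)
    (hnear : ∀ t ∈ Ioo 0 η, (∀ j, b j ≠ 0 → sign (perturbedLine lam g b ε t j) = sign (b j)) ∧
      ∑ j, gradientMapping lam g b j * (g b j - g (perturbedLine lam g b ε t) j) ≤ c) :
    R (perturbedLine lam g b ε η) - R (perturbedLine lam g b ε 0)
      ≤ (c - ∑ j, gradientMapping lam g b j ^ 2) * η := by
  have hderiv (t : ℝ) (ht : t ∈ Ioo 0 η) : HasDerivAt (fun s => R (perturbedLine lam g b ε s))
      (-∑ j, gradientMapping lam g b j *
        (g (perturbedLine lam g b ε t) j + lam * sign (perturbedLine lam g b ε t j))) t :=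
    hasDerivAt_comp_sub_smul hdiff (perturbedLine_apply_ne_zero hε ht.1 (hnear t ht).1)
  have hslope (t : ℝ) (ht : t ∈ Ioo 0 η) : -∑ j, gradientMapping lam g b j *
      (g (perturbedLine lam g b ε t) j + lam * sign (perturbedLine lam g b ε t j))
        ≤ c - ∑ j, gradientMapping lam g b j ^ 2 := by
    obtain ⟨hsign, hclose⟩ := hnear t ht
    rw [sum_gradientMapping_mul_add_sign_perturbedLine ht.1 hsign]
    simp only [mul_sub, Finset.sum_sub_distrib] at hclose ⊢
    linarith
  simpa using image_sub_le_mul_sub_of_hasDerivAt_le hη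
    (hR.comp (by unfold perturbedLine; fun_prop)).continuousOn hderiv hslope

theorem sub_smul_gradientMapping_sub_le_of_perturbedLine (hR : Continuous R) {C δ η : ℝ}
    (hδ : 0 < δ) (hline : ∀ ε ∈ Ioo 0 δ,
      R (perturbedLine lam g b ε η) - R (perturbedLine lam g b ε 0) ≤ C) :
    R (b - η • gradientMapping lam g b) - R b ≤ C := by
  have hcont : Continuous fun ε =>
      R (perturbedLine lam g b ε η) - R (perturbedLine lam g b ε 0) := by
    unfold perturbedLine; fun_prop
  simpa [perturbedLine] using le_of_tendsto ((hcont.tendsto 0).mono_left nhdsWithin_le_nhds)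
    (eventually_of_mem (Ioo_mem_nhdsGT hδ) hline)

end PerturbedLine

end Lasso

theorem descent_step_at_noncritical_point_general
    {p : ℕ} (lam : ℝ) (hlam : 0 < lam)
    (g : (Fin p → ℝ) → (Fin p → ℝ)) (hg : Continuous g)
    (R : (Fin p → ℝ) → ℝ) (hR : Continuous R)
    (hdiff : ∀ β : Fin p → ℝ, (∀ i, β i ≠ 0) →
      DifferentiableAt ℝ R β ∧
      ∀ i, fderiv ℝ R β (Pi.single i 1) = g β i + lam * Real.sign (β i))
    (β0 : Fin p → ℝ) (hnc : ¬ IsCriticalPoint lam g β0) :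
    ∃ η0 > 0, ∀ η : ℝ, 0 < η → η ≤ η0 →
      R (fun i => soft (η * lam) (β0 i - η * g β0 i)) < R β0 := by
  set m := gradientMapping lam g β0
  set c := (∑ j, m j ^ 2) / 2
  have hc : 0 < c := by
    obtain ⟨i, hi⟩ := exists_gradientMapping_ne_zero hnc
    have := Finset.sum_pos' (fun j _ => sq_nonneg (m j)) ⟨i, Finset.mem_univ i, by positivity⟩
    positivity
  have hnear : ∀ᶠ x in 𝓝 β0, (∀ j, β0 j ≠ 0 → sign (x j) = sign (β0 j)) ∧
      ∑ j, m j * (g β0 j - g x j) < c :=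
    (eventually_sign_eq_sign β0).and
      (ContinuousAt.eventually_lt (by fun_prop) continuousAt_const (by simpa using hc))
  obtain ⟨δ, hδ, hδnear⟩ := exists_pos_forall_abs_lt_of_eventually hnear
    (fun j => if m j = 0 then 1 else 0) m
  refine ⟨δ / 2, by positivity, fun η hη hηδ => ?_⟩
  have hηδ' : |η| < δ := by rw [abs_of_pos hη]; linarith
  rw [soft_step_eq_sub_smul_gradientMapping hlam.le hη
    (by simpa using (hδnear 0 η (by simpa) hηδ').1)]
  have hdescent : R (β0 - η • m) - R β0 ≤ (c - ∑ j, m j ^ 2) * η :=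
    sub_smul_gradientMapping_sub_le_of_perturbedLine hR hδ fun ε hε =>
      perturbedLine_descent hdiff hR hε.1 hη fun t ht =>
        have hx := hδnear ε t (by rw [abs_of_pos hε.1]; exact hε.2)
          (by rw [abs_of_pos ht.1]; linarith [ht.2])
        ⟨hx.1, hx.2.le⟩
  have hcm : c - ∑ j, m j ^ 2 = -c := by ring
  nlinarith

theorem descent_step_at_noncritical_point
    {p : ℕ} (hp : 1 ≤ p) (lam : ℝ) (hlam : 0 < lam)
    (g : (Fin p → ℝ) → (Fin p → ℝ)) (hg : Continuous g)
    (R : (Fin p → ℝ) → ℝ) (hR : Continuous R)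
    (hdiff : ∀ β : Fin p → ℝ, (∀ i, β i ≠ 0) →
      DifferentiableAt ℝ R β ∧
      ∀ i, fderiv ℝ R β (Pi.single i 1) = g β i + lam * Real.sign (β i))
    (β0 : Fin p → ℝ) (hnc : ¬ IsCriticalPoint lam g β0) :
    ∃ η0 > 0, ∀ η : ℝ, 0 < η → η ≤ η0 →
      R (fun i => soft (η * lam) (β0 i - η * g β0 i)) < R β0 :=
  descent_step_at_noncritical_point_general lam hlam g hg R hR hdiff β0 hnc
end

section
/- Let N, r, q ≥ 1, let F ∈ ℝ^{N×r} with F'F invertible, let Y ∈ ℝ^{N×q}, and set Â := (F'F)⁻¹ F' Y ∈ ℝ^{r×q} (the ordinary least squares coefficient matrix). Then for every A ∈ ℝ^{r×q}, det( (Y − FÂ)'(Y − FÂ) ) ≤ det( (Y − FA)'(Y − FA) ); that is, in the multivariate regression model the coefficient matrix minimizing the determinant of the residual cross-product matrix coincides with the least squares estimator. -/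
/-!
Write `Y - F A = Ê + G` with `Ê` the least squares residual and `G = F (Â - A)`. The normal
equations `F' Ê = 0` kill the cross terms, so `(Y - F A)'(Y - F A) = Ê'Ê + G'G` with `G'G`
positive semidefinite. The determinant is monotone on positive semidefinite matrices: if `P` is
invertible with square root `S`, then `det (P + Q) = det P * det (1 + S⁻¹ Q S⁻¹)`, and the last
factor is at least `1` because every eigenvalue of `1 + C` is at least `1` when `C ≥ 0`.
-/

open Matrix
open scoped Pointwise

namespace Matrix

variable {m n p : Type*} [Fintype m] [Fintype n]

theorem PosSemidef.one_le_det_one_add [DecidableEq n] {C : Matrix n n ℝ} (hC : C.PosSemidef) :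
    1 ≤ (1 + C).det := by
  have hH : (1 + C).IsHermitian := isHermitian_one.add hC.isHermitian
  rw [hH.det_eq_prod_eigenvalues]
  refine Finset.one_le_prod fun i _ => ?_
  have hmem : hH.eigenvalues i ∈ ({1} : Set ℝ) + spectrum ℝ C := by
    rw [spectrum.singleton_add_eq, map_one]
    exact hH.eigenvalues_mem_spectrum_real i
  obtain ⟨_, rfl, μ, hμ, hμi⟩ := hmem
  have hμ0 : 0 ≤ μ := (posSemidef_iff_isHermitian_and_spectrum_nonneg.mp hC).2 hμ
  simp only [RCLike.ofReal_real_eq_id, id_eq, ← hμi]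
  linarith

open scoped MatrixOrder in
theorem PosSemidef.det_le_det_add [DecidableEq n] {A B : Matrix n n ℝ} (hA : A.PosSemidef)
    (hB : B.PosSemidef) : A.det ≤ (A + B).det := by
  rcases eq_or_ne A.det 0 with hA0 | hA0
  · exact hA0 ▸ (hA.add hB).det_nonneg
  set S := CFC.sqrt A
  have hSS : S * S = A := CFC.sqrt_mul_sqrt_self A hA.nonneg
  have hS : IsUnit S.det := by
    rw [isUnit_iff_ne_zero]
    intro h
    exact hA0 (by rw [← hSS, det_mul, h, zero_mul])
  have hC : (S⁻¹ * B * S⁻¹).PosSemidef := by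
    have hSinv : (S⁻¹)ᴴ = S⁻¹ := (CFC.sqrt_nonneg A).posSemidef.isHermitian.inv.eq
    simpa only [hSinv] using hB.mul_mul_conjTranspose_same S⁻¹
  have hfactor : A + B = S * (1 + S⁻¹ * B * S⁻¹) * S := by
    simp [mul_add, add_mul, Matrix.mul_assoc, hSS, nonsing_inv_mul _ hS,
      mul_nonsing_inv_cancel_left _ _ hS]
  calc A.det = A.det * 1 := (mul_one _).symm
    _ ≤ A.det * (1 + S⁻¹ * B * S⁻¹).det :=
      mul_le_mul_of_nonneg_left hC.one_le_det_one_add hA.det_nonneg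
    _ = (A + B).det := by rw [hfactor, ← hSS, det_mul, det_mul, det_mul]; ring

theorem posSemidef_transpose_mul_self (A : Matrix m n ℝ) : (Aᵀ * A).PosSemidef := by
  simpa using posSemidef_conjTranspose_mul_self A

theorem det_transpose_mul_self_le_of_transpose_mul_eq_zero [DecidableEq n] {E G : Matrix m n ℝ}
    (h : Eᵀ * G = 0) : (Eᵀ * E).det ≤ ((E + G)ᵀ * (E + G)).det := by
  have hG : Gᵀ * E = 0 := by simpa using congrArg transpose h
  have hsplit : (E + G)ᵀ * (E + G) = Eᵀ * E + Gᵀ * G := by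
    rw [transpose_add, Matrix.add_mul, Matrix.mul_add, Matrix.mul_add, h, hG, add_zero, zero_add]
  exact hsplit ▸ (posSemidef_transpose_mul_self E).det_le_det_add (posSemidef_transpose_mul_self G)

theorem transpose_mul_sub_mul_nonsing_inv_eq_zero {R : Type*} [CommRing R] [DecidableEq n]
    (F : Matrix m n R) (Y : Matrix m p R) (hF : IsUnit (Fᵀ * F).det) :
    Fᵀ * (Y - F * ((Fᵀ * F)⁻¹ * Fᵀ * Y)) = 0 := by
  rw [Matrix.mul_sub, ← Matrix.mul_assoc Fᵀ F, Matrix.mul_assoc (Fᵀ * F)⁻¹,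
    mul_nonsing_inv_cancel_left _ _ hF, sub_self]

end Matrix

theorem ols_minimizes_determinant_of_residual_crossproduct_general
    {N r q : ℕ}
    (F : Matrix (Fin N) (Fin r) ℝ) (hF : IsUnit (Fᵀ * F).det)
    (Y : Matrix (Fin N) (Fin q) ℝ) :
    ∀ A : Matrix (Fin r) (Fin q) ℝ,
      ((Y - F * ((Fᵀ * F)⁻¹ * Fᵀ * Y))ᵀ * (Y - F * ((Fᵀ * F)⁻¹ * Fᵀ * Y))).det ≤
      ((Y - F * A)ᵀ * (Y - F * A)).det := by
  intro A
  set E := Y - F * ((Fᵀ * F)⁻¹ * Fᵀ * Y)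
  have hdecomp : Y - F * A = E + F * ((Fᵀ * F)⁻¹ * Fᵀ * Y - A) := by
    rw [Matrix.mul_sub, add_sub, sub_add_cancel]
  have horth : Eᵀ * (F * ((Fᵀ * F)⁻¹ * Fᵀ * Y - A)) = 0 := by
    rw [← Matrix.mul_assoc, ← transpose_transpose (Eᵀ * F), transpose_mul, transpose_transpose,
      transpose_mul_sub_mul_nonsing_inv_eq_zero F Y hF, transpose_zero, Matrix.zero_mul]
  exact hdecomp ▸ det_transpose_mul_self_le_of_transpose_mul_eq_zero horth

theorem ols_minimizes_determinant_of_residual_crossproduct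
    {N r q : ℕ} (hN : 1 ≤ N) (hr : 1 ≤ r) (hq : 1 ≤ q)
    (F : Matrix (Fin N) (Fin r) ℝ) (hF : IsUnit (Fᵀ * F).det)
    (Y : Matrix (Fin N) (Fin q) ℝ) :
    ∀ A : Matrix (Fin r) (Fin q) ℝ,
      ((Y - F * ((Fᵀ * F)⁻¹ * Fᵀ * Y))ᵀ * (Y - F * ((Fᵀ * F)⁻¹ * Fᵀ * Y))).det ≤
      ((Y - F * A)ᵀ * (Y - F * A)).det :=
  ols_minimizes_determinant_of_residual_crossproduct_general F hF Y
end

section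
/- Suppose (β̂, Γ̂) ∈ ℝ^p × ℝ^{q×(k+1)} is a global minimizer of the determinant loss G₂, and set Σ̂ := Σ(β̂, Γ̂). If Σ̂ is invertible and the p×p matrix M := (1/N) Σ_{t=c+k+1}^{T−h} X_t' Γ̂' Σ̂⁻¹ Γ̂ X_t is invertible, then β̂ = M⁻¹ · ( (1/N) Σ_{t=c+k+1}^{T−h} X_t' Γ̂' Σ̂⁻¹ y_{t+h} ). Moreover, if F(β̂)'F(β̂) is invertible, then Γ̂ = 𝒢(β̂) = Y' F(β̂) (F(β̂)'F(β̂))⁻¹. -/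
open Finset Matrix

noncomputable section

/-- The `(k+1) × p` matrix `X_t` whose rows are `x_t', x_{t-1}', …, x_{t-k}'. -/
def Xmat {p : ℕ} (k : ℕ) (x : ℕ → Fin p → ℝ) (t : ℕ) :
    Matrix (Fin (k + 1)) (Fin p) ℝ :=
  Matrix.of fun j i => x (t - (j : ℕ)) i

/-- Prediction error `e_t(β,Γ) = y_{t+h} - Γ X_t β`. -/
def errVec {p q : ℕ} (h k : ℕ) (x : ℕ → Fin p → ℝ) (y : ℕ → Fin q → ℝ)
    (β : Fin p → ℝ) (Γ : Matrix (Fin q) (Fin (k + 1)) ℝ) (t : ℕ) : Fin q → ℝ :=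
  y (t + h) - (Γ * Xmat k x t).mulVec β

/-- Residual covariance matrix `Σ(β,Γ) = (1/N) Σ_t e_t(β,Γ) e_t(β,Γ)'`. -/
def SigmaMat (T h c k : ℕ) {p q : ℕ} (x : ℕ → Fin p → ℝ) (y : ℕ → Fin q → ℝ)
    (β : Fin p → ℝ) (Γ : Matrix (Fin q) (Fin (k + 1)) ℝ) :
    Matrix (Fin q) (Fin q) ℝ :=
  (1 / ((T - h - c - k : ℕ) : ℝ)) •
    ∑ t ∈ Icc (c + k + 1) (T - h),
      Matrix.vecMulVec (errVec h k x y β Γ t) (errVec h k x y β Γ t)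

/-- Determinant loss `G₂(β,Γ) = det Σ(β,Γ)`. -/
def lossG2 (T h c k : ℕ) {p q : ℕ} (x : ℕ → Fin p → ℝ) (y : ℕ → Fin q → ℝ)
    (β : Fin p → ℝ) (Γ : Matrix (Fin q) (Fin (k + 1)) ℝ) : ℝ :=
  (SigmaMat T h c k x y β Γ).det

/-- The `N × (k+1)` matrix `F(β)` whose row `j` (corresponding to `t = c+k+1+j`)
is `(X_t β)'`. -/
def Fmat (T h c k : ℕ) {p : ℕ} (x : ℕ → Fin p → ℝ) (β : Fin p → ℝ) :
    Matrix (Fin (T - h - c - k)) (Fin (k + 1)) ℝ :=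
  Matrix.of fun j l => (Xmat k x (c + k + 1 + (j : ℕ))).mulVec β l

/-- The `N × q` matrix `Y` whose row `j` (corresponding to `t = c+k+1+j`) is `y_{t+h}'`. -/
def Ymat (T h c k : ℕ) {q : ℕ} (y : ℕ → Fin q → ℝ) :
    Matrix (Fin (T - h - c - k)) (Fin q) ℝ :=
  Matrix.of fun j a => y (c + k + 1 + (j : ℕ) + h) a

/-- `𝒢(β) = Y' F(β) (F(β)'F(β))⁻¹`. -/
def calG (T h c k : ℕ) {p q : ℕ} (x : ℕ → Fin p → ℝ) (y : ℕ → Fin q → ℝ)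
    (β : Fin p → ℝ) : Matrix (Fin q) (Fin (k + 1)) ℝ :=
  (Ymat T h c k y)ᵀ * Fmat T h c k x β *
    ((Fmat T h c k x β)ᵀ * Fmat T h c k x β)⁻¹

section Aux

variable {n : Type*} [DecidableEq n] [Fintype n]

set_option linter.unusedSectionVars false

theorem trace_adjugate_mul' (M A : Matrix n n ℝ) :
    (adjugate M * A).trace = ∑ i, (M.updateCol i (fun r => A r i)).det := by
  simp only [Matrix.trace, Matrix.diag, Matrix.mul_apply]
  refine Finset.sum_congr rfl fun i _ => ?_
  have h2 := congrFun (Matrix.cramer_eq_adjugate_mulVec M (fun r => A r i)) i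
  rw [Matrix.cramer_apply] at h2
  simp only [Matrix.mulVec, dotProduct] at h2
  exact h2.symm

theorem det_updateColumn_eq' (M : Matrix n n ℝ) (i : n) (b : n → ℝ) :
    (M.updateCol i b).det =
      ∑ σ : Equiv.Perm n, ((Equiv.Perm.sign σ : ℤ) : ℝ) *
        (b (σ i) * ∏ j ∈ Finset.univ.erase i, M (σ j) j) := by
  rw [Matrix.det_apply']
  refine Finset.sum_congr rfl fun σ _ => ?_
  congr 1
  rw [← Finset.mul_prod_erase Finset.univ _ (Finset.mem_univ i)]
  rw [Matrix.updateCol_self]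
  congr 1
  refine Finset.prod_congr rfl fun j hj => ?_
  rw [Matrix.updateCol_apply, if_neg (Finset.ne_of_mem_erase hj)]

theorem hasDerivAt_det_aux' (f : ℝ → Matrix n n ℝ) (A : Matrix n n ℝ) (x : ℝ)
    (hf : ∀ i j, HasDerivAt (fun s => f s i j) (A i j) x) :
    HasDerivAt (fun s => (f s).det) ((adjugate (f x) * A).trace) x := by
  have key : ∀ σ : Equiv.Perm n, HasDerivAt (fun s => ∏ i, f s (σ i) i)
      (∑ i, (∏ j ∈ Finset.univ.erase i, f x (σ j) j) • A (σ i) i) x :=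
    fun σ => HasDerivAt.fun_finsetProd (fun i _ => hf (σ i) i)
  have main : HasDerivAt (fun s => (f s).det)
      (∑ σ : Equiv.Perm n, ((Equiv.Perm.sign σ : ℤ) : ℝ) *
        ∑ i, (∏ j ∈ Finset.univ.erase i, f x (σ j) j) • A (σ i) i) x := by
    simp only [Matrix.det_apply']
    exact HasDerivAt.fun_sum (fun σ _ => (key σ).const_mul _)
  convert main using 1
  rw [trace_adjugate_mul']
  simp only [det_updateColumn_eq', Finset.mul_sum, smul_eq_mul]
  rw [Finset.sum_comm]
  refine Finset.sum_congr rfl fun σ _ => Finset.sum_congr rfl fun i _ => ?_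
  ring

theorem trace_mul_vecMulVec' (B : Matrix n n ℝ) (a b : n → ℝ) :
    (B * vecMulVec a b).trace = b ⬝ᵥ (B *ᵥ a) := by
  simp only [Matrix.trace, Matrix.diag, Matrix.mul_apply, Matrix.vecMulVec_apply,
    dotProduct, Matrix.mulVec, Finset.mul_sum]
  exact Finset.sum_congr rfl fun i _ => Finset.sum_congr rfl fun j _ => by ring

theorem dot_symm' (B : Matrix n n ℝ) (hB : Bᵀ = B) (a b : n → ℝ) :
    a ⬝ᵥ (B *ᵥ b) = b ⬝ᵥ (B *ᵥ a) := by
  rw [Matrix.dotProduct_mulVec, ← Matrix.mulVec_transpose, hB, dotProduct_comm]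

/-- Core first-order condition: if `Σ(r) := ν • ∑ (e-r w)(e-r w)'` has a global
minimum of determinant at `r = 0`, then `∑ w_t' adj(Σ₀) e_t = 0`. -/
theorem core_lemma' {q : ℕ} (s : Finset ℕ) (ν : ℝ) (hν : ν ≠ 0)
    (e w : ℕ → Fin q → ℝ)
    (hmin : ∀ r : ℝ, (ν • ∑ t ∈ s, vecMulVec (e t) (e t)).det ≤
        (ν • ∑ t ∈ s, vecMulVec (e t - r • w t) (e t - r • w t)).det) :
    ∑ t ∈ s, (w t) ⬝ᵥ ((adjugate (ν • ∑ t ∈ s, vecMulVec (e t) (e t))) *ᵥ e t) = 0 := by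
  set M0 : Matrix (Fin q) (Fin q) ℝ := ν • ∑ t ∈ s, vecMulVec (e t) (e t) with hM0
  set f : ℝ → Matrix (Fin q) (Fin q) ℝ :=
    fun r => ν • ∑ t ∈ s, vecMulVec (e t - r • w t) (e t - r • w t) with hf
  set A : Matrix (Fin q) (Fin q) ℝ :=
    ν • ∑ t ∈ s, (-(vecMulVec (w t) (e t) + vecMulVec (e t) (w t))) with hA
  have hf0 : f 0 = M0 := by simp [hf, hM0]
  have hent : ∀ i j, HasDerivAt (fun r => f r i j) (A i j) 0 := by
    intro i j
    have hterm : ∀ t, HasDerivAt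
        (fun r : ℝ => (e t i - r * w t i) * (e t j - r * w t j))
        (-(w t i * e t j + e t i * w t j)) 0 := by
      intro t
      have h1 : HasDerivAt (fun r : ℝ => e t i - r * w t i) (-(w t i)) 0 := by
        simpa using ((hasDerivAt_id (0:ℝ)).mul_const (w t i)).const_sub (e t i)
      have h2 : HasDerivAt (fun r : ℝ => e t j - r * w t j) (-(w t j)) 0 := by
        simpa using ((hasDerivAt_id (0:ℝ)).mul_const (w t j)).const_sub (e t j)
      have := h1.fun_mul h2
      exact this.congr_deriv (by ring)
    have hsum := HasDerivAt.fun_sum (fun t (_ : t ∈ s) => hterm t)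
    have := hsum.const_mul ν
    refine (this.congr_deriv ?_).congr_of_eventuallyEq (Filter.Eventually.of_forall fun r => ?_)
    · simp [hA, Matrix.smul_apply, Matrix.sum_apply, Matrix.vecMulVec_apply,
        Finset.mul_sum, smul_eq_mul]
    · simp [hf, Matrix.smul_apply, Matrix.sum_apply, Matrix.vecMulVec_apply,
        Finset.mul_sum, smul_eq_mul]
  have hD := hasDerivAt_det_aux' f A 0 hent
  have hlm : IsLocalMin (fun r => (f r).det) 0 :=
    Filter.Eventually.of_forall fun r => by
      show (f 0).det ≤ (f r).det
      rw [hf0]; exact hmin r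
  have htr : (adjugate (f 0) * A).trace = 0 := hlm.hasDerivAt_eq_zero hD
  rw [hf0] at htr
  have hsymm : M0ᵀ = M0 := by
    have hv : ∀ t : ℕ, (vecMulVec (e t) (e t))ᵀ = vecMulVec (e t) (e t) := fun t => by
      ext i j; simp [Matrix.vecMulVec_apply, mul_comm]
    simp [hM0, Matrix.transpose_smul, Matrix.transpose_sum, hv]
  have hadj : (adjugate M0)ᵀ = adjugate M0 := by
    rw [Matrix.adjugate_transpose, hsymm]
  have hcomp : (adjugate M0 * A).trace =
      ν * (-(2 * ∑ t ∈ s, (w t) ⬝ᵥ ((adjugate M0) *ᵥ e t))) := by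
    rw [hA, Matrix.mul_smul, Matrix.trace_smul, Matrix.mul_sum, Matrix.trace_sum]
    rw [smul_eq_mul]
    congr 1
    rw [Finset.mul_sum, ← Finset.sum_neg_distrib]
    refine Finset.sum_congr rfl fun t _ => ?_
    rw [Matrix.mul_neg, Matrix.trace_neg, Matrix.mul_add, Matrix.trace_add,
      trace_mul_vecMulVec', trace_mul_vecMulVec', dot_symm' _ hadj]
    ring
  rw [hcomp] at htr
  rcases mul_eq_zero.mp htr with h | h
  · exact absurd h hν
  · linarith

theorem sum_mulVec_aux {ι m n : Type*} [Fintype n] (s : Finset ι)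
    (A : ι → Matrix m n ℝ) (v : n → ℝ) :
    (∑ t ∈ s, A t) *ᵥ v = ∑ t ∈ s, (A t) *ᵥ v := by
  ext i
  simp only [Matrix.mulVec, dotProduct, Matrix.sum_apply, Finset.sum_apply,
    Finset.sum_mul]
  rw [Finset.sum_comm]

theorem transpose_mul_eq_sum_vecMulVec {m n p : Type*} [Fintype m]
    (A : Matrix m n ℝ) (B : Matrix m p ℝ) :
    Aᵀ * B = ∑ j, vecMulVec (A j) (B j) := by
  ext l c
  simp [Matrix.mul_apply, Matrix.sum_apply, Matrix.vecMulVec_apply, Matrix.transpose_apply]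

theorem dot_single_aux {a b : Type*} [Fintype a] [Fintype b] [DecidableEq b]
    (M : Matrix a b ℝ) (u : a → ℝ) (i : b) :
    (M *ᵥ Pi.single i 1) ⬝ᵥ u = (Mᵀ *ᵥ u) i := by
  simp [Matrix.mulVec_single, Matrix.mulVec, dotProduct, Matrix.transpose_apply,
    Pi.single_apply, mul_ite, mul_one, mul_zero, Finset.sum_ite_eq', mul_comm]

theorem mul_vecMulVec {m n p : Type*} [Fintype n]
    (M : Matrix m n ℝ) (a : n → ℝ) (b : p → ℝ) :
    vecMulVec (M *ᵥ a) b = M * vecMulVec a b := by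
  ext i j
  simp [Matrix.vecMulVec_apply, Matrix.mulVec, dotProduct, Matrix.mul_apply,
    Finset.sum_mul, mul_assoc]

end Aux

theorem fixed_point_equations_for_G2_minimizer
    {p q : ℕ} (hp : 1 ≤ p) (hq : 1 ≤ q) (T h c k : ℕ)
    (hN : 1 ≤ T - h - c - k)
    (x : ℕ → Fin p → ℝ) (y : ℕ → Fin q → ℝ)
    (βhat : Fin p → ℝ) (Γhat : Matrix (Fin q) (Fin (k + 1)) ℝ)
    (hmin : ∀ (β : Fin p → ℝ) (Γ : Matrix (Fin q) (Fin (k + 1)) ℝ),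
      lossG2 T h c k x y βhat Γhat ≤ lossG2 T h c k x y β Γ)
    (hSig : IsUnit (SigmaMat T h c k x y βhat Γhat).det) :
    (IsUnit ((1 / ((T - h - c - k : ℕ) : ℝ)) •
        ∑ t ∈ Icc (c + k + 1) (T - h),
          (Xmat k x t)ᵀ * Γhatᵀ * (SigmaMat T h c k x y βhat Γhat)⁻¹ *
            Γhat * Xmat k x t).det →
      βhat = ((1 / ((T - h - c - k : ℕ) : ℝ)) •
        ∑ t ∈ Icc (c + k + 1) (T - h),
          (Xmat k x t)ᵀ * Γhatᵀ * (SigmaMat T h c k x y βhat Γhat)⁻¹ *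
            Γhat * Xmat k x t)⁻¹.mulVec
        ((1 / ((T - h - c - k : ℕ) : ℝ)) •
          ∑ t ∈ Icc (c + k + 1) (T - h),
            (Xmat k x t)ᵀ.mulVec (Γhatᵀ.mulVec
              ((SigmaMat T h c k x y βhat Γhat)⁻¹.mulVec (y (t + h)))))) ∧
    (IsUnit ((Fmat T h c k x βhat)ᵀ * Fmat T h c k x βhat).det →
      Γhat = calG T h c k x y βhat) := by
  classical
  set s : Finset ℕ := Icc (c + k + 1) (T - h) with hs
  set ν : ℝ := 1 / ((T - h - c - k : ℕ) : ℝ) with hνdef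
  have hν : ν ≠ 0 := by
    rw [hνdef]
    exact one_div_ne_zero (by exact_mod_cast Nat.one_le_iff_ne_zero.mp hN)
  set e : ℕ → Fin q → ℝ := errVec h k x y βhat Γhat with he
  set Sg : Matrix (Fin q) (Fin q) ℝ := SigmaMat T h c k x y βhat Γhat with hSgdef
  have hSge : Sg = ν • ∑ t ∈ s, vecMulVec (e t) (e t) := rfl
  have hdet_ne : Sg.det ≠ 0 := hSig.ne_zero
  -- useful: inverse in terms of adjugate
  have hinv : ∀ u : Fin q → ℝ, Sg⁻¹ *ᵥ u = Sg.det⁻¹ • (adjugate Sg *ᵥ u) := by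
    intro u
    rw [Matrix.inv_def, Ring.inverse_eq_inv, Matrix.smul_mulVec]
  -- ============ β direction ============
  have hβdir : ∀ v : Fin p → ℝ,
      ∑ t ∈ s, ((Γhat * Xmat k x t) *ᵥ v) ⬝ᵥ (adjugate Sg *ᵥ e t) = 0 := by
    intro v
    have key := core_lemma' s ν hν e (fun t => (Γhat * Xmat k x t) *ᵥ v) ?_
    · rw [← hSge] at key; exact key
    · intro r
      have herr : ∀ t, errVec h k x y (βhat + r • v) Γhat t
          = e t - r • ((Γhat * Xmat k x t) *ᵥ v) := by
        intro t
        simp [he, errVec, Matrix.mulVec_add, Matrix.mulVec_smul, sub_add_eq_sub_sub]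
      have hm := hmin (βhat + r • v) Γhat
      simp only [lossG2, SigmaMat, herr] at hm
      exact hm
  have hβvec : ∑ t ∈ s, (Γhat * Xmat k x t)ᵀ *ᵥ (adjugate Sg *ᵥ e t) = 0 := by
    funext i
    have h1 := hβdir (Pi.single i 1)
    calc (∑ t ∈ s, (Γhat * Xmat k x t)ᵀ *ᵥ (adjugate Sg *ᵥ e t)) i
        = ∑ t ∈ s, ((Γhat * Xmat k x t)ᵀ *ᵥ (adjugate Sg *ᵥ e t)) i :=
          Finset.sum_apply i s _
      _ = ∑ t ∈ s, ((Γhat * Xmat k x t) *ᵥ Pi.single i 1) ⬝ᵥ (adjugate Sg *ᵥ e t) := by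
          simp only [dot_single_aux]
      _ = 0 := h1
  -- zero identity with Σ⁻¹
  have hzero : ∑ t ∈ s, (Xmat k x t)ᵀ *ᵥ (Γhatᵀ *ᵥ (Sg⁻¹ *ᵥ e t)) = 0 := by
    have h2 : ∑ t ∈ s, (Xmat k x t)ᵀ *ᵥ (Γhatᵀ *ᵥ (adjugate Sg *ᵥ e t)) = 0 := by
      have := hβvec
      simp only [Matrix.transpose_mul, ← Matrix.mulVec_mulVec] at this
      exact this
    calc ∑ t ∈ s, (Xmat k x t)ᵀ *ᵥ (Γhatᵀ *ᵥ (Sg⁻¹ *ᵥ e t))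
        = Sg.det⁻¹ • ∑ t ∈ s, (Xmat k x t)ᵀ *ᵥ (Γhatᵀ *ᵥ (adjugate Sg *ᵥ e t)) := by
          rw [Finset.smul_sum]
          exact Finset.sum_congr rfl fun t _ => by
            rw [hinv, Matrix.mulVec_smul, Matrix.mulVec_smul]
      _ = 0 := by rw [h2, smul_zero]
  -- ============ Γ direction ============
  have hΓdir : ∀ Δ : Matrix (Fin q) (Fin (k + 1)) ℝ,
      ∑ t ∈ s, (Δ *ᵥ ((Xmat k x t) *ᵥ βhat)) ⬝ᵥ (adjugate Sg *ᵥ e t) = 0 := by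
    intro Δ
    have key := core_lemma' s ν hν e (fun t => Δ *ᵥ ((Xmat k x t) *ᵥ βhat)) ?_
    · rw [← hSge] at key; exact key
    · intro r
      have herr : ∀ t, errVec h k x y βhat (Γhat + r • Δ) t
          = e t - r • (Δ *ᵥ ((Xmat k x t) *ᵥ βhat)) := by
        intro t
        simp [he, errVec, Matrix.add_mul, Matrix.smul_mul, Matrix.add_mulVec,
          Matrix.smul_mulVec, sub_add_eq_sub_sub, Matrix.mulVec_mulVec]
      have hm := hmin βhat (Γhat + r • Δ)
      simp only [lossG2, SigmaMat, herr] at hm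
      exact hm
  -- entrywise: ∑_t f_t l * (adj Σ *ᵥ e t) a = 0
  have hD1 : ∀ (a : Fin q) (l : Fin (k + 1)),
      ∑ t ∈ s, ((Xmat k x t) *ᵥ βhat) l * (adjugate Sg *ᵥ e t) a = 0 := by
    intro a l
    have h1 := hΓdir (vecMulVec (Pi.single a 1) (Pi.single l 1))
    have hmv : ∀ t, (vecMulVec (Pi.single a (1:ℝ)) (Pi.single l 1)) *ᵥ
        ((Xmat k x t) *ᵥ βhat) = Pi.single a (((Xmat k x t) *ᵥ βhat) l) := by
      intro t
      funext i
      simp [Matrix.mulVec, dotProduct, Matrix.vecMulVec_apply, Pi.single_apply,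
        ite_mul, Finset.sum_ite_eq', mul_comm]
    simp only [hmv] at h1
    simpa [dotProduct, Pi.single_apply, ite_mul, Finset.sum_ite_eq'] using h1
  -- D = 0 entrywise
  have hON : ∀ (t : ℕ) (b : Fin q), e t b
      = Sg.det⁻¹ * ∑ a, Sg b a * (adjugate Sg *ᵥ e t) a := by
    intro t b
    set u : Fin q → ℝ := adjugate Sg *ᵥ e t with hu
    have h2 : Sg *ᵥ u = Sg.det • e t := by
      rw [hu, Matrix.mulVec_mulVec, Matrix.mul_adjugate, Matrix.smul_mulVec,
        Matrix.one_mulVec]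
    have h4 : (Sg *ᵥ u) b = ∑ a, Sg b a * u a := by
      simp [Matrix.mulVec, dotProduct]
    have h3 := congrFun h2 b
    rw [h4] at h3
    rw [h3, Pi.smul_apply, smul_eq_mul, ← mul_assoc, inv_mul_cancel₀ hdet_ne, one_mul]
  have hDzero : ∀ (b : Fin q) (l : Fin (k + 1)),
      ∑ t ∈ s, e t b * ((Xmat k x t) *ᵥ βhat) l = 0 := by
    intro b l
    calc ∑ t ∈ s, e t b * ((Xmat k x t) *ᵥ βhat) l
        = ∑ t ∈ s, ∑ a, Sg.det⁻¹ *
            (Sg b a * (((Xmat k x t) *ᵥ βhat) l * (adjugate Sg *ᵥ e t) a)) := by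
          refine Finset.sum_congr rfl fun t _ => ?_
          rw [hON t b, Finset.mul_sum, Finset.sum_mul]
          exact Finset.sum_congr rfl fun a _ => by ring
      _ = ∑ a, ∑ t ∈ s, Sg.det⁻¹ *
            (Sg b a * (((Xmat k x t) *ᵥ βhat) l * (adjugate Sg *ᵥ e t) a)) :=
          Finset.sum_comm
      _ = 0 := by
          refine Finset.sum_eq_zero fun a _ => ?_
          rw [← Finset.mul_sum, ← Finset.mul_sum, hD1 a l, mul_zero, mul_zero]
  constructor
  · -- β fixed point equation
    intro hM
    set M : Matrix (Fin p) (Fin p) ℝ :=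
      ν • ∑ t ∈ s, (Xmat k x t)ᵀ * Γhatᵀ * Sg⁻¹ * Γhat * Xmat k x t with hMdef
    set bvec : Fin p → ℝ :=
      ν • ∑ t ∈ s, (Xmat k x t)ᵀ *ᵥ (Γhatᵀ *ᵥ (Sg⁻¹ *ᵥ y (t + h))) with hbdef
    have hb : M *ᵥ βhat = bvec := by
      have hM' : M *ᵥ βhat = ν • ∑ t ∈ s,
          (Xmat k x t)ᵀ *ᵥ (Γhatᵀ *ᵥ (Sg⁻¹ *ᵥ ((Γhat * Xmat k x t) *ᵥ βhat))) := by
        rw [hMdef, Matrix.smul_mulVec, sum_mulVec_aux]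
        congr 1
        refine Finset.sum_congr rfl fun t _ => ?_
        simp only [← Matrix.mulVec_mulVec]
      rw [hM', hbdef, ← sub_eq_zero, ← smul_sub, ← Finset.sum_sub_distrib]
      have hterm : ∀ t ∈ s,
          (Xmat k x t)ᵀ *ᵥ (Γhatᵀ *ᵥ (Sg⁻¹ *ᵥ ((Γhat * Xmat k x t) *ᵥ βhat)))
            - (Xmat k x t)ᵀ *ᵥ (Γhatᵀ *ᵥ (Sg⁻¹ *ᵥ y (t + h)))
          = -((Xmat k x t)ᵀ *ᵥ (Γhatᵀ *ᵥ (Sg⁻¹ *ᵥ e t))) := by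
        intro t _
        rw [← Matrix.mulVec_sub, ← Matrix.mulVec_sub, ← Matrix.mulVec_sub]
        have : (Γhat * Xmat k x t) *ᵥ βhat - y (t + h) = -(e t) := by
          rw [he]; simp [errVec, neg_sub]
        rw [this]
        simp [Matrix.mulVec_neg]
      rw [Finset.sum_congr rfl hterm, Finset.sum_neg_distrib, hzero, neg_zero, smul_zero]
    rw [← hb, Matrix.mulVec_mulVec, Matrix.nonsing_inv_mul _ hM, Matrix.one_mulVec]
  · -- Γ fixed point equation
    intro hF
    have hre : ∀ (g : ℕ → ℝ), ∑ t ∈ s, g t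
        = ∑ j : Fin (T - h - c - k), g (c + k + 1 + (j : ℕ)) := by
      intro g
      rw [hs]
      refine (Finset.sum_bij'
        (i := fun (j : Fin (T - h - c - k)) (_ : j ∈ Finset.univ) => c + k + 1 + (j : ℕ))
        (j := fun t (ht : t ∈ Icc (c + k + 1) (T - h)) =>
          (⟨t - (c + k + 1), by have := Finset.mem_Icc.mp ht; omega⟩ : Fin (T - h - c - k)))
        ?_ ?_ ?_ ?_ ?_).symm
      · intro j _
        have := j.isLt
        simp only [Finset.mem_Icc]
        omega
      · intro t ht
        exact Finset.mem_univ _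
      · intro j _
        have := j.isLt
        ext
        simp
      · intro t ht
        have := (Finset.mem_Icc.mp ht).1
        simp
        omega
      · intro j _
        rfl
    have hGF : Γhat * ((Fmat T h c k x βhat)ᵀ * Fmat T h c k x βhat)
        = (Ymat T h c k y)ᵀ * Fmat T h c k x βhat := by
      ext a l
      rw [transpose_mul_eq_sum_vecMulVec, transpose_mul_eq_sum_vecMulVec, Matrix.mul_sum]
      simp only [← _root_.mul_vecMulVec, Matrix.sum_apply, Matrix.vecMulVec_apply]
      rw [← sub_eq_zero, ← Finset.sum_sub_distrib]
      have hD' := hDzero a l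
      rw [hre (fun t => e t a * ((Xmat k x t) *ᵥ βhat) l)] at hD'
      calc ∑ j : Fin (T - h - c - k),
            ((Γhat *ᵥ Fmat T h c k x βhat j) a * Fmat T h c k x βhat j l
              - Ymat T h c k y j a * Fmat T h c k x βhat j l)
          = ∑ j : Fin (T - h - c - k),
            -(e (c + k + 1 + (j : ℕ)) a * ((Xmat k x (c + k + 1 + (j : ℕ))) *ᵥ βhat) l) := by
            refine Finset.sum_congr rfl fun j _ => ?_
            have h5 : e (c + k + 1 + (j : ℕ)) a
                = Ymat T h c k y j a - (Γhat *ᵥ Fmat T h c k x βhat j) a := by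
              rw [he]
              simp only [errVec, Ymat, Fmat, Matrix.of_apply, Pi.sub_apply,
                ← Matrix.mulVec_mulVec]
              rfl
            rw [h5]
            have h6 : Fmat T h c k x βhat j l
                = ((Xmat k x (c + k + 1 + (j : ℕ))) *ᵥ βhat) l := rfl
            rw [h6]
            ring
          _ = 0 := by rw [Finset.sum_neg_distrib, hD', neg_zero]
    show Γhat = (Ymat T h c k y)ᵀ * Fmat T h c k x βhat *
      ((Fmat T h c k x βhat)ᵀ * Fmat T h c k x βhat)⁻¹
    rw [← hGF, Matrix.mul_assoc, Matrix.mul_nonsing_inv _ hF, Matrix.mul_one]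
end
end

section
/- For every fixed Γ ∈ ℝ^{q×(k+1)} and every β ∈ ℝ^p at which Σ(β,Γ) is invertible, the function β ↦ G₂(β,Γ) = det Σ(β,Γ) is differentiable at β and its gradient equals −(2 · det Σ(β,Γ) / N) Σ_{t=c+k+1}^{T−h} X_t' Γ' Σ(β,Γ)⁻¹ (y_{t+h} − Γ X_t β). In particular, if det Σ(β,Γ) > 0, the gradient vanishes if and only if Σ_{t=c+k+1}^{T−h} X_t' Γ' Σ(β,Γ)⁻¹ (y_{t+h} − Γ X_t β) = 0. -/
open Finset Matrix

noncomputable section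

/-!
Jacobi's formula: the determinant is multilinear in the rows, and replacing row `i` of `Σ` by `w`
gives determinant `∑ⱼ adj(Σ)ⱼᵢ wⱼ`, so `d(det Σ) = ∑ᵢⱼ adj(Σ)ⱼᵢ dΣᵢⱼ`. For
`Σ(b) = c ∑ₜ eₜ(b) eₜ(b)ᵀ` with affine residuals `eₜ(b) = yₜ - Mₜ b` one has
`dΣ(v) = -c ∑ₜ (eₜ (Mₜ v)ᵀ + (Mₜ v) eₜᵀ)`. As `Σ`, hence `adj Σ`, is symmetric, both terms
contribute `eₜᵀ adj(Σ) Mₜ v`, so the gradient of `det Σ` is `-2c ∑ₜ Mₜᵀ adj(Σ) eₜ`. Finally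
`adj Σ = det Σ • Σ⁻¹` when `Σ` is invertible, and here `Mₜ = Γ Xₜ`, `c = 1/N`.
-/

theorem Matrix.det_updateRow_eq_sum_mul_adjugate {R n : Type*} [CommRing R] [Fintype n]
    [DecidableEq n] (A : Matrix n n R) (i : n) (w : n → R) :
    (A.updateRow i w).det = ∑ j, A.adjugate j i * w j := by
  rw [← cramer_transpose_apply, cramer_eq_adjugate_mulVec, ← adjugate_transpose]
  rfl

theorem hasFDerivAt_det_of_entries {𝕜 n E : Type*} [NontriviallyNormedField 𝕜] [Fintype n]
    [DecidableEq n] [NormedAddCommGroup E] [NormedSpace 𝕜 E] {F : E → Matrix n n 𝕜}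
    {F' : n → n → E →L[𝕜] 𝕜} {x : E} (hF : ∀ i j, HasFDerivAt (fun b => F b i j) (F' i j) x) :
    HasFDerivAt (fun b => (F b).det) (∑ i, ∑ j, (F x).adjugate j i • F' i j) x := by
  let detRows : ContinuousMultilinearMap 𝕜 (fun _ : n => n → 𝕜) 𝕜 :=
    ⟨detRowAlternating.toMultilinearMap, continuous_id.matrix_det⟩
  have hrows : ∀ i, HasFDerivAt (fun b => F b i) (ContinuousLinearMap.pi (F' i)) x :=
    fun i => hasFDerivAt_pi.2 (hF i)
  refine (HasFDerivAt.multilinear_comp (f := detRows) hrows).congr_fderiv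
    (ContinuousLinearMap.ext fun v => ?_)
  simp only [_root_.sum_apply, ContinuousLinearMap.comp_apply,
    ContinuousMultilinearMap.toContinuousLinearMap_apply, _root_.smul_apply, smul_eq_mul]
  exact Finset.sum_congr rfl fun i _ => (F x).det_updateRow_eq_sum_mul_adjugate i _

theorem Matrix.IsSymm.sum_sum_mul_add_mul {R n : Type*} [CommRing R] [Fintype n]
    {A : Matrix n n R} (hA : A.IsSymm) (u w : n → R) :
    ∑ i, ∑ j, A j i * (u i * w j + u j * w i) = 2 * ((A *ᵥ u) ⬝ᵥ w) := by
  simp only [mul_add, sum_add_distrib, dotProduct, mulVec, sum_mul]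
  rw [Finset.sum_comm (f := fun i j => A j i * (u i * w j)), two_mul]
  simp only [hA.apply, mul_assoc]

section ResidualCov

variable {R ι m n : Type*} [CommRing R] [Fintype m] (c : R) (s : Finset ι) (y : ι → n → R)
  (M : ι → Matrix n m R)

def residualCov (b : m → R) : Matrix n n R :=
  c • ∑ t ∈ s, vecMulVec (y t - M t *ᵥ b) (y t - M t *ᵥ b)

theorem residualCov_isSymm (b : m → R) : (residualCov c s y M b).IsSymm := by
  simp only [IsSymm, residualCov, transpose_smul, transpose_sum, transpose_vecMulVec]

theorem residualCov_apply (b : m → R) (i j : n) :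
    residualCov c s y M b i j = c * ∑ t ∈ s, (y t - M t *ᵥ b) i * (y t - M t *ᵥ b) j := by
  simp only [residualCov, Matrix.smul_apply, Matrix.sum_apply, vecMulVec_apply, smul_eq_mul]

end ResidualCov

section Derivative

variable {𝕜 ι m n : Type*} [NontriviallyNormedField 𝕜] [CompleteSpace 𝕜] [Fintype m]
  [Fintype n] (c : 𝕜) (s : Finset ι) (y : ι → n → 𝕜) (M : ι → Matrix n m 𝕜)

theorem hasFDerivAt_residual_apply (t : ι) (i : n) (b : m → 𝕜) :
    HasFDerivAt (fun b => (y t - M t *ᵥ b) i)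
      (ContinuousLinearMap.proj i ∘L (-(M t).mulVecLin.toContinuousLinearMap)) b :=
  hasFDerivAt_pi'.1 (((hasFDerivAt_const (y t) b).fun_sub
    (M t).mulVecLin.toContinuousLinearMap.hasFDerivAt).congr_fderiv (zero_sub _)) i

theorem hasFDerivAt_residualCov_apply (b : m → 𝕜) (i j : n) :
    HasFDerivAt (fun b => residualCov c s y M b i j)
      (c • ∑ t ∈ s,
        ((y t - M t *ᵥ b) i •
            (ContinuousLinearMap.proj j ∘L (-(M t).mulVecLin.toContinuousLinearMap)) +
          (y t - M t *ᵥ b) j •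
            (ContinuousLinearMap.proj i ∘L (-(M t).mulVecLin.toContinuousLinearMap)))) b := by
  simp only [residualCov_apply]
  exact (HasFDerivAt.fun_sum fun t _ =>
    (hasFDerivAt_residual_apply y M t i b).mul (hasFDerivAt_residual_apply y M t j b)).const_mul c

variable [DecidableEq n]

theorem fderiv_det_residualCov_apply (b v : m → 𝕜) :
    fderiv 𝕜 (fun b => (residualCov c s y M b).det) b v =
      (-(2 * c) • ∑ t ∈ s, (M t)ᵀ *ᵥ ((residualCov c s y M b).adjugate *ᵥ (y t - M t *ᵥ b)))
        ⬝ᵥ v := by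
  rw [(hasFDerivAt_det_of_entries (hasFDerivAt_residualCov_apply c s y M b)).fderiv]
  set A := (residualCov c s y M b).adjugate
  have hA : A.IsSymm := (residualCov_isSymm c s y M b).adjugate
  calc _ = c * ∑ t ∈ s, ∑ i, ∑ j, A j i * ((y t - M t *ᵥ b) i * -(M t *ᵥ v) j
          + (y t - M t *ᵥ b) j * -(M t *ᵥ v) i) := by
        simp only [_root_.sum_apply, _root_.smul_apply, _root_.add_apply,
          ContinuousLinearMap.comp_apply, _root_.neg_apply, ContinuousLinearMap.proj_apply,
          LinearMap.coe_toContinuousLinearMap', mulVecLin_apply, Pi.neg_apply, smul_eq_mul,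
          Finset.mul_sum]
        conv_lhs => arg 2; ext i; rw [Finset.sum_comm]
        rw [Finset.sum_comm]
        refine Finset.sum_congr rfl fun t _ => Finset.sum_congr rfl fun i _ =>
          Finset.sum_congr rfl fun j _ => ?_
        ring
    _ = c * ∑ t ∈ s, 2 * ((A *ᵥ (y t - M t *ᵥ b)) ⬝ᵥ -(M t *ᵥ v)) := by
        simp only [← hA.sum_sum_mul_add_mul, Pi.neg_apply]
    _ = _ := by
        simp only [smul_dotProduct, sum_dotProduct, dotProduct_neg, mulVec_transpose,
          ← dotProduct_mulVec, smul_eq_mul, Finset.mul_sum]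
        exact Finset.sum_congr rfl fun t _ => by ring

theorem differentiableAt_det_residualCov (b : m → 𝕜) :
    DifferentiableAt 𝕜 (fun b => (residualCov c s y M b).det) b :=
  (hasFDerivAt_det_of_entries (hasFDerivAt_residualCov_apply c s y M b)).differentiableAt

theorem fderiv_det_residualCov_apply_of_isUnit (b v : m → 𝕜)
    (hb : IsUnit (residualCov c s y M b).det) :
    fderiv 𝕜 (fun b => (residualCov c s y M b).det) b v =
      (-(2 * c * (residualCov c s y M b).det) •
        ∑ t ∈ s, (M t)ᵀ *ᵥ ((residualCov c s y M b)⁻¹ *ᵥ (y t - M t *ᵥ b))) ⬝ᵥ v := by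
  simp only [fderiv_det_residualCov_apply, ← cramer_eq_adjugate_mulVec,
    ← det_smul_inv_mulVec_eq_cramer _ _ hb, mulVec_smul, ← smul_sum, smul_smul, neg_mul]

end Derivative

theorem gradient_of_G2_in_beta_general
    {p q : ℕ} (T h c k : ℕ)
    (hN : 1 ≤ T - h - c - k)
    (x : ℕ → Fin p → ℝ) (y : ℕ → Fin q → ℝ)
    (Γ : Matrix (Fin q) (Fin (k + 1)) ℝ) (β : Fin p → ℝ)
    (hSig : IsUnit (SigmaMat T h c k x y β Γ).det) :
    DifferentiableAt ℝ (fun b : Fin p → ℝ => lossG2 T h c k x y b Γ) β ∧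
    (∀ i, fderiv ℝ (fun b : Fin p → ℝ => lossG2 T h c k x y b Γ) β (Pi.single i 1)
      = ((-(2 * (SigmaMat T h c k x y β Γ).det / ((T - h - c - k : ℕ) : ℝ))) •
          ∑ t ∈ Icc (c + k + 1) (T - h),
            (Xmat k x t)ᵀ.mulVec (Γᵀ.mulVec
              ((SigmaMat T h c k x y β Γ)⁻¹.mulVec (errVec h k x y β Γ t)))) i) ∧
    (0 < (SigmaMat T h c k x y β Γ).det →
      ((∀ i, fderiv ℝ (fun b : Fin p → ℝ => lossG2 T h c k x y b Γ) β
          (Pi.single i 1) = 0) ↔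
        ∑ t ∈ Icc (c + k + 1) (T - h),
          (Xmat k x t)ᵀ.mulVec (Γᵀ.mulVec
            ((SigmaMat T h c k x y β Γ)⁻¹.mulVec (errVec h k x y β Γ t))) = 0)) := by
  set N : ℝ := ((T - h - c - k : ℕ) : ℝ)
  set g := ∑ t ∈ Icc (c + k + 1) (T - h),
    (Xmat k x t)ᵀ.mulVec (Γᵀ.mulVec ((SigmaMat T h c k x y β Γ)⁻¹.mulVec (errVec h k x y β Γ t)))
  have hSigma : ∀ b, SigmaMat T h c k x y b Γ = residualCov (1 / N) (Icc (c + k + 1) (T - h))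
      (fun t => y (t + h)) (fun t => Γ * Xmat k x t) b := fun _ => rfl
  have hgrad : ∀ v, fderiv ℝ (fun b => lossG2 T h c k x y b Γ) β v
      = ((-(2 * (SigmaMat T h c k x y β Γ).det / N)) • g) ⬝ᵥ v := by
    intro v
    simp only [lossG2, hSigma] at hSig ⊢
    rw [fderiv_det_residualCov_apply_of_isUnit _ _ _ _ _ _ hSig, ← hSigma]
    congr 2
    · ring
    · exact sum_congr rfl fun t _ => by rw [transpose_mul, ← mulVec_mulVec]; rfl
  have hgrad_single : ∀ i, fderiv ℝ (fun b => lossG2 T h c k x y b Γ) β (Pi.single i 1)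
      = ((-(2 * (SigmaMat T h c k x y β Γ).det / N)) • g) i := fun i => by
    rw [hgrad, dotProduct_single, mul_one]
  refine ⟨differentiableAt_det_residualCov _ _ _ _ β, hgrad_single, fun hdet => ?_⟩
  have hN0 : 0 < N := Nat.cast_pos.2 hN
  simp only [hgrad_single]
  exact funext_iff.symm.trans (smul_eq_zero_iff_right (neg_ne_zero.2 (by positivity)))

theorem gradient_of_G2_in_beta
    {p q : ℕ} (hp : 1 ≤ p) (hq : 1 ≤ q) (T h c k : ℕ)
    (hN : 1 ≤ T - h - c - k)
    (x : ℕ → Fin p → ℝ) (y : ℕ → Fin q → ℝ)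
    (Γ : Matrix (Fin q) (Fin (k + 1)) ℝ) (β : Fin p → ℝ)
    (hSig : IsUnit (SigmaMat T h c k x y β Γ).det) :
    DifferentiableAt ℝ (fun b : Fin p → ℝ => lossG2 T h c k x y b Γ) β ∧
    (∀ i, fderiv ℝ (fun b : Fin p → ℝ => lossG2 T h c k x y b Γ) β (Pi.single i 1)
      = ((-(2 * (SigmaMat T h c k x y β Γ).det / ((T - h - c - k : ℕ) : ℝ))) •
          ∑ t ∈ Icc (c + k + 1) (T - h),
            (Xmat k x t)ᵀ.mulVec (Γᵀ.mulVec
              ((SigmaMat T h c k x y β Γ)⁻¹.mulVec (errVec h k x y β Γ t)))) i) ∧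
    (0 < (SigmaMat T h c k x y β Γ).det →
      ((∀ i, fderiv ℝ (fun b : Fin p → ℝ => lossG2 T h c k x y b Γ) β
          (Pi.single i 1) = 0) ↔
        ∑ t ∈ Icc (c + k + 1) (T - h),
          (Xmat k x t)ᵀ.mulVec (Γᵀ.mulVec
            ((SigmaMat T h c k x y β Γ)⁻¹.mulVec (errVec h k x y β Γ t))) = 0)) :=
  gradient_of_G2_in_beta_general T h c k hN x y Γ β hSig
end
end
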